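/- Let S₁,…,Sₙ be axis-parallel closed squares with side lengths s₁,…,sₙ > 0, contained in the unit square U = [0,1]², with pairwise disjoint interiors, and suppose each Sᵢ intersects the topological frontier of U. Then ∑ᵢ sᵢ ≤ 4. (Instance of Proposition 3: since the unit square is parallel to an axis-parallel square, each boundary-touching square has a full side on the boundary of U, and these sides have pairwise disjoint relative interiors.) -/

import Mathlib

open MeasureTheory Metric Set

/-- The axis-parallel closed square `[a, a+s] × [b, b+s] ⊆ ℝ²`. -/
def axisSquare (a b s : ℝ) : Set (EuclideanSpace ℝ (Fin 2)) :=
  {p | p 0 ∈ Set.Icc a (a + s) ∧ p 1 ∈ Set.Icc b (b + s)}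

/-- The unit square `[0,1]² ⊆ ℝ²`. -/
def unitSquare : Set (EuclideanSpace ℝ (Fin 2)) := axisSquare 0 0 1

/-! A square touching the frontier of `U` has a whole side on one of the four sides of `U`.
Two squares with disjoint interiors lying on the same side of `U` project onto that side along
intervals with disjoint interiors, so by additivity of Lebesgue measure the squares on any one
side have total side length at most `1`; every square is counted on at least one of the four
sides. -/

lemma Finset.sum_union_le_add {ι M : Type*} [DecidableEq ι] [AddCommMonoid M] [PartialOrder M]
    [IsOrderedAddMonoid M] {S T : Finset ι} {f : ι → M} (hf : ∀ i ∈ S ∩ T, 0 ≤ f i) :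
    ∑ i ∈ S ∪ T, f i ≤ ∑ i ∈ S, f i + ∑ i ∈ T, f i := by
  rw [← sum_union_inter]
  exact le_add_of_nonneg_right (sum_nonneg hf)

lemma sum_le_of_pairwiseDisjoint_Ioo {ι : Type*} {T : Finset ι} {x w : ι → ℝ} {c d : ℝ}
    (hcd : c ≤ d) (hw : ∀ i ∈ T, 0 ≤ w i) (hsub : ∀ i ∈ T, c ≤ x i ∧ x i + w i ≤ d)
    (hdisj : (T : Set ι).PairwiseDisjoint fun i => Ioo (x i) (x i + w i)) :
    ∑ i ∈ T, w i ≤ d - c := by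
  have hvol : ENNReal.ofReal (∑ i ∈ T, w i) ≤ ENNReal.ofReal (d - c) :=
    calc ENNReal.ofReal (∑ i ∈ T, w i) = ∑ i ∈ T, volume (Ioo (x i) (x i + w i)) := by
          rw [ENNReal.ofReal_sum_of_nonneg hw]
          simp only [Real.volume_Ioo, add_sub_cancel_left]
      _ = volume (⋃ i ∈ T, Ioo (x i) (x i + w i)) :=
          (measure_biUnion_finset hdisj fun _ _ => measurableSet_Ioo).symm
      _ ≤ volume (Icc c d) := measure_mono <| iUnion₂_subset fun i hi =>
          Ioo_subset_Icc_self.trans (Icc_subset_Icc (hsub i hi).1 (hsub i hi).2)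
      _ = ENNReal.ofReal (d - c) := Real.volume_Icc
  exact (ENNReal.ofReal_le_ofReal_iff (sub_nonneg.2 hcd)).1 hvol

section axisSquare

variable {a b s a' b' s' : ℝ}

lemma mem_interior_axisSquare {p : EuclideanSpace ℝ (Fin 2)}
    (h0 : p 0 ∈ Ioo a (a + s)) (h1 : p 1 ∈ Ioo b (b + s)) :
    p ∈ interior (axisSquare a b s) := by
  have hopen : IsOpen {q : EuclideanSpace ℝ (Fin 2) | q 0 ∈ Ioo a (a + s) ∧ q 1 ∈ Ioo b (b + s)} :=
    (isOpen_Ioo.preimage (by fun_prop)).inter (isOpen_Ioo.preimage (by fun_prop))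
  refine interior_maximal ?_ hopen ⟨h0, h1⟩
  exact fun q hq => ⟨Ioo_subset_Icc_self hq.1, Ioo_subset_Icc_self hq.2⟩

lemma bounds_of_axisSquare_subset_unitSquare (hs : 0 ≤ s) (h : axisSquare a b s ⊆ unitSquare) :
    0 ≤ a ∧ a + s ≤ 1 ∧ 0 ≤ b ∧ b + s ≤ 1 := by
  have hlo : !₂[a, b] ∈ unitSquare := h (by simp [axisSquare, hs])
  have hhi : !₂[a + s, b + s] ∈ unitSquare := h (by simp [axisSquare, hs])
  simp_all [unitSquare, axisSquare]

lemma coord_eq_zero_or_one_of_mem_frontier_unitSquare {p : EuclideanSpace ℝ (Fin 2)}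
    (hU : p ∈ unitSquare) (hF : p ∈ frontier unitSquare) :
    p 0 = 0 ∨ p 0 = 1 ∨ p 1 = 0 ∨ p 1 = 1 := by
  by_contra! h
  obtain ⟨⟨h00, h01⟩, h10, h11⟩ := hU
  rw [zero_add] at h01 h11
  exact hF.2 <| mem_interior_axisSquare ⟨h00.lt_of_ne' h.1, by simpa using h01.lt_of_ne h.2.1⟩
    ⟨h10.lt_of_ne' h.2.2.1, by simpa using h11.lt_of_ne h.2.2.2⟩

lemma side_eq_of_touches_frontier_unitSquare (hs : 0 ≤ s) (hsub : axisSquare a b s ⊆ unitSquare)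
    (htouch : (axisSquare a b s ∩ frontier unitSquare).Nonempty) :
    b = 0 ∨ b + s = 1 ∨ a = 0 ∨ a + s = 1 := by
  obtain ⟨p, ⟨⟨hp0, hp1⟩, hpF⟩⟩ := htouch
  obtain ⟨ha, has, hb, hbs⟩ := bounds_of_axisSquare_subset_unitSquare hs hsub
  rcases coord_eq_zero_or_one_of_mem_frontier_unitSquare (hsub ⟨hp0, hp1⟩) hpF with h | h | h | h
  · exact .inr <| .inr <| .inl (by linarith [hp0.1])
  · exact .inr <| .inr <| .inr (by linarith [hp0.2])
  · exact .inl (by linarith [hp1.1])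
  · exact .inr <| .inl (by linarith [hp1.2])

lemma disjoint_Ioo_fst_of_disjoint_interior_axisSquare
    (h : Disjoint (interior (axisSquare a b s)) (interior (axisSquare a' b' s')))
    (hy : ¬Disjoint (Ioo b (b + s)) (Ioo b' (b' + s'))) :
    Disjoint (Ioo a (a + s)) (Ioo a' (a' + s')) := by
  obtain ⟨y, hy, hy'⟩ := not_disjoint_iff.1 hy
  exact disjoint_left.2 fun x hx hx' => disjoint_left.1 h
    (mem_interior_axisSquare (p := !₂[x, y]) (by simpa) (by simpa))
    (mem_interior_axisSquare (by simpa) (by simpa))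

lemma disjoint_Ioo_snd_of_disjoint_interior_axisSquare
    (h : Disjoint (interior (axisSquare a b s)) (interior (axisSquare a' b' s')))
    (hx : ¬Disjoint (Ioo a (a + s)) (Ioo a' (a' + s'))) :
    Disjoint (Ioo b (b + s)) (Ioo b' (b' + s')) := by
  obtain ⟨x, hx, hx'⟩ := not_disjoint_iff.1 hx
  exact disjoint_left.2 fun y hy hy' => disjoint_left.1 h
    (mem_interior_axisSquare (p := !₂[x, y]) (by simpa) (by simpa))
    (mem_interior_axisSquare (by simpa) (by simpa))

end axisSquare

section packing

variable {ι : Type*} {a b s : ι → ℝ}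

lemma sum_le_one_of_pairwise_not_disjoint_Ioo_snd {T : Finset ι} (hs : ∀ i, 0 ≤ s i)
    (hsub : ∀ i, axisSquare (a i) (b i) (s i) ⊆ unitSquare)
    (hdisj : Pairwise fun i j =>
      Disjoint (interior (axisSquare (a i) (b i) (s i))) (interior (axisSquare (a j) (b j) (s j))))
    (hrow : (T : Set ι).Pairwise fun i j =>
      ¬Disjoint (Ioo (b i) (b i + s i)) (Ioo (b j) (b j + s j))) :
    ∑ i ∈ T, s i ≤ 1 := by
  have hbd i := bounds_of_axisSquare_subset_unitSquare (hs i) (hsub i)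
  simpa using sum_le_of_pairwiseDisjoint_Ioo zero_le_one (fun i _ => hs i)
    (fun i _ => ⟨(hbd i).1, (hbd i).2.1⟩) fun i hi j hj hij =>
      disjoint_Ioo_fst_of_disjoint_interior_axisSquare (hdisj hij) (hrow hi hj hij)

lemma sum_le_one_of_pairwise_not_disjoint_Ioo_fst {T : Finset ι} (hs : ∀ i, 0 ≤ s i)
    (hsub : ∀ i, axisSquare (a i) (b i) (s i) ⊆ unitSquare)
    (hdisj : Pairwise fun i j =>
      Disjoint (interior (axisSquare (a i) (b i) (s i))) (interior (axisSquare (a j) (b j) (s j))))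
    (hcol : (T : Set ι).Pairwise fun i j =>
      ¬Disjoint (Ioo (a i) (a i + s i)) (Ioo (a j) (a j + s j))) :
    ∑ i ∈ T, s i ≤ 1 := by
  have hbd i := bounds_of_axisSquare_subset_unitSquare (hs i) (hsub i)
  simpa using sum_le_of_pairwiseDisjoint_Ioo zero_le_one (fun i _ => hs i)
    (fun i _ => ⟨(hbd i).2.2.1, (hbd i).2.2.2⟩) fun i hi j hj hij =>
      disjoint_Ioo_snd_of_disjoint_interior_axisSquare (hdisj hij) (hcol hi hj hij)

end packing

lemma not_disjoint_Ioo_of_left_eq {x y x' y' : ℝ} (h : x = x') (hy : x < y) (hy' : x' < y') :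
    ¬Disjoint (Ioo x y) (Ioo x' y') := by
  rw [Ioo_disjoint_Ioo, not_le, max_lt_iff, lt_min_iff, lt_min_iff]
  subst h
  exact ⟨⟨hy, hy'⟩, hy, hy'⟩

lemma not_disjoint_Ioo_of_right_eq {x y x' y' : ℝ} (h : y = y') (hy : x < y) (hy' : x' < y') :
    ¬Disjoint (Ioo x y) (Ioo x' y') := by
  rw [Ioo_disjoint_Ioo, not_le, max_lt_iff, lt_min_iff, lt_min_iff]
  subst h
  exact ⟨⟨hy, hy⟩, hy', hy'⟩

/-- If axis-parallel squares with side lengths `s₁, …, sₙ` are packed in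
the unit square and each touches its frontier, then `∑ sᵢ ≤ 4`. -/
theorem squares_touching_unit_square_boundary_sum_le_four
    (n : ℕ) (a b s : Fin n → ℝ)
    (hs : ∀ i, 0 < s i)
    (hsub : ∀ i, axisSquare (a i) (b i) (s i) ⊆ unitSquare)
    (hdisj : ∀ i j, i ≠ j →
      Disjoint (interior (axisSquare (a i) (b i) (s i)))
               (interior (axisSquare (a j) (b j) (s j))))
    (htouch : ∀ i, (axisSquare (a i) (b i) (s i) ∩ frontier unitSquare).Nonempty) :
    ∑ i, s i ≤ 4 := by
  classical
  have hs₀ i := (hs i).le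
  have hlt i : b i < b i + s i ∧ a i < a i + s i := ⟨by linarith [hs i], by linarith [hs i]⟩
  set B : Finset (Fin n) := {i | b i = 0}
  set T : Finset (Fin n) := {i | b i + s i = 1}
  set L : Finset (Fin n) := {i | a i = 0}
  set R : Finset (Fin n) := {i | a i + s i = 1}
  have hB : ∑ i ∈ B, s i ≤ 1 := sum_le_one_of_pairwise_not_disjoint_Ioo_snd hs₀ hsub hdisj
    fun i hi j hj _ => not_disjoint_Ioo_of_left_eq (by simp_all [B]) (hlt i).1 (hlt j).1
  have hT : ∑ i ∈ T, s i ≤ 1 := sum_le_one_of_pairwise_not_disjoint_Ioo_snd hs₀ hsub hdisj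
    fun i hi j hj _ => not_disjoint_Ioo_of_right_eq (by simp_all [T]) (hlt i).1 (hlt j).1
  have hL : ∑ i ∈ L, s i ≤ 1 := sum_le_one_of_pairwise_not_disjoint_Ioo_fst hs₀ hsub hdisj
    fun i hi j hj _ => not_disjoint_Ioo_of_left_eq (by simp_all [L]) (hlt i).2 (hlt j).2
  have hR : ∑ i ∈ R, s i ≤ 1 := sum_le_one_of_pairwise_not_disjoint_Ioo_fst hs₀ hsub hdisj
    fun i hi j hj _ => not_disjoint_Ioo_of_right_eq (by simp_all [R]) (hlt i).2 (hlt j).2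
  have hcover : B ∪ T ∪ L ∪ R = Finset.univ := Finset.eq_univ_of_forall fun i => by
    simpa [B, T, L, R, or_assoc] using
      side_eq_of_touches_frontier_unitSquare (hs₀ i) (hsub i) (htouch i)
  have hunion (P Q : Finset (Fin n)) := Finset.sum_union_le_add (S := P) (T := Q) fun i _ => hs₀ i
  have := hunion (B ∪ T ∪ L) R
  have := hunion (B ∪ T) L
  have := hunion B T
  rw [← hcover]
  linarith
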